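/- Let k be a field, r a positive integer, T = (kˣ)^r, and let W be a finite subgroup of the symmetric group S_r acting on T by permuting coordinates. For any integer q ≥ 2, the set of W-orbits in T fixed by the map induced by t ↦ t^q is finite. -/
import Mathlib


/-- For T = (kˣ)^r with a finite group W ⊆ S_r of permutations acting by permuting
coordinates and q ≥ 2, the set of W-orbits in T fixed by the map induced by
t ↦ t^q is finite. -/
theorem stmt10 (k : Type*) [Field k] (r q : ℕ) (hr : 0 < r) (hq : 2 ≤ q)
    (W : Subgroup (Equiv.Perm (Fin r)))
    (rel : Setoid (Fin r → kˣ))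
    (hrel : ∀ s s' : Fin r → kˣ, rel.r s s' ↔ ∃ σ ∈ W, s' = s ∘ σ) :
    {o : Quotient rel | ∃ s : Fin r → kˣ,
      Quotient.mk rel s = o ∧ Quotient.mk rel (fun i => (s i) ^ q) = o}.Finite := by
  classical
  set F := Fintype.card (Equiv.Perm (Fin r)) with hF
  set N := q ^ F - 1 with hNdef
  have hqF : 1 ≤ q ^ F := Nat.one_le_pow _ _ (by omega)
  have hN : N + 1 = q ^ F := by omega
  -- each coordinate of a representative lies in the N-th roots of unity
  have hroots : {x : kˣ | x ^ N = 1}.Finite := by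
    have hNpos : 0 < N := by
      have hF0 : 0 < F := Fintype.card_pos
      have : 1 < q ^ F := Nat.one_lt_pow (by omega) (by omega)
      omega
    have hpoly : (Polynomial.X ^ N - 1 : Polynomial k) ≠ 0 := by
      intro h
      have h2 := Polynomial.natDegree_X_pow_sub_C (n := N) (r := (1 : k))
      rw [Polynomial.C_1, h] at h2
      simp at h2
      omega
    have hfin := Polynomial.finite_setOf_isRoot hpoly
    apply Set.Finite.of_finite_image (f := fun x : kˣ => (x : k))
    · apply hfin.subset
      rintro _ ⟨x, hx, rfl⟩
      simp only [Set.mem_setOf_eq] at hx ⊢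
      have : ((x : k)) ^ N = 1 := by
        have := congrArg (Units.val) hx
        simpa using this
      simp [Polynomial.IsRoot, this]
    · intro x _ y _ h
      exact Units.ext h
  have hSfin : {s : Fin r → kˣ | ∀ i, (s i) ^ N = 1}.Finite := by
    have := Set.Finite.pi (fun i : Fin r => hroots)
    apply this.subset
    intro s hs
    simp only [Set.mem_pi, Set.mem_univ, forall_true_left]
    exact fun i => hs i
  apply (hSfin.image (Quotient.mk rel)).subset
  rintro o ⟨s, hso, hsq⟩
  refine ⟨s, ?_, hso⟩
  have heq : Quotient.mk rel s = Quotient.mk rel (fun i => (s i) ^ q) := by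
    rw [hso, hsq]
  have hr' : rel.r s (fun i => (s i) ^ q) := Quotient.exact heq
  obtain ⟨σ, hσW, hσ⟩ := (hrel _ _).mp hr'
  -- iterate: s i ^ (q ^ n) = s (σ ^ n i)
  have key : ∀ n : ℕ, ∀ i, (s i) ^ (q ^ n) = s ((σ ^ n) i) := by
    intro n
    induction n with
    | zero => simp
    | succ n ih =>
      intro i
      have h1 : (s i) ^ (q ^ (n + 1)) = ((s i) ^ (q ^ n)) ^ q := by
        rw [← pow_mul, pow_succ]
      rw [h1, ih i]
      have h2 : (s ((σ ^ n) i)) ^ q = s (σ ((σ ^ n) i)) := by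
        have := congrFun hσ ((σ ^ n) i)
        simpa using this
      rw [h2]
      congr 1
      rw [pow_succ']
      rfl
  have hfix : ∀ i, (s i) ^ (q ^ F) = s i := by
    intro i
    rw [key F i, pow_card_eq_one]
    rfl
  intro i
  have := hfix i
  rw [← hN, pow_succ] at this
  exact mul_right_cancel (by rw [this, one_mul])
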